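/- Let ${\cal A} = (T_A(V), δ)$ be a weak ditalgebra, I an ${\cal A}$-balanced ideal of A (δ(I) ⊆ IV + VI), and J the ideal of ${\cal A}$ generated by I. Then the following are equivalent: (1) ${\cal A}$ is interlaced with I; (2) δ²(A) ⊆ J and δ²(V) ⊆ J; (3) δ²(T) ⊆ J. -/

import Mathlib

/-!
Here `A = 𝒜 0`, `V = 𝒜 1`, and `T = T_A(V)` is encoded by `𝒜 (i + 1) = 𝒜 i * 𝒜 1`, which
forces `𝒜 (n + 1) = V ^ (n + 1)`.

Because `1 ∈ A` and the grading is internal, the ideal generated by an `A`-bimodule `I ⊆ A` is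
graded, with degree-`n` part `∑_{p+q=n} 𝒜 p * I * 𝒜 q = ∑_{p+q=n} V^p I V^q`; balance
`δ(I) ⊆ IV + VI` means that the generators `IV + δ(I) + VI` add nothing to it. In degrees 2 and 3
these parts are exactly the spaces in the definition of "interlaced", and `δ²(A) ⊆ 𝒜 2`,
`δ²(V) ⊆ 𝒜 3`; this gives (1) ↔ (2). For (2) → (3): the signs in the graded Leibniz rule cancel,
so `δ²` is an ordinary derivation, and `T` is generated by `A` and `V`.
-/

open Submodule

theorem DirectSum.IsInternal.mem_iSup_fiber_of_mem_iSup {ι κ R M : Type*} [DecidableEq ι]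
    [Semiring R] [AddCommMonoid M] [Module R M] {𝒜 : ι → Submodule R M}
    (h𝒜 : DirectSum.IsInternal 𝒜)
    {N : κ → Submodule R M} {deg : κ → ι} (hN : ∀ c, N c ≤ 𝒜 (deg c)) {x : M}
    (hx : x ∈ ⨆ c, N c) {n : ι} (hxn : x ∈ 𝒜 n) : x ∈ ⨆ (c) (_ : deg c = n), N c := by
  let := h𝒜.chooseDecomposition
  rw [← DirectSum.decompose_of_mem_same 𝒜 hxn]
  refine Submodule.iSup_induction N (motive := fun y => (DirectSum.decompose 𝒜 y n : M) ∈ _) hx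
    (fun c y hy => ?_) (by simp) (fun y z hy hz => by simpa using add_mem hy hz)
  by_cases hc : deg c = n
  · rw [DirectSum.decompose_of_mem_same 𝒜 (hc ▸ hN c hy)]
    exact mem_iSup_of_mem c (mem_iSup_of_mem hc hy)
  · rw [DirectSum.decompose_of_mem_ne 𝒜 (hN c hy) hc]
    exact zero_mem _

section Graded

variable {k T : Type*} [CommSemiring k] [Semiring T] [Algebra k T] {𝒜 : ℕ → Submodule k T}
  {I : Submodule k T}

theorem succ_eq_pow_of_succ_eq_mul (hgen : ∀ i, 𝒜 (i + 1) = 𝒜 i * 𝒜 1) (n : ℕ) :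
    𝒜 (n + 1) = 𝒜 1 ^ (n + 1) := by
  induction n with
  | zero => rw [zero_add, pow_one]
  | succ n ih => rw [hgen, ih, ← pow_succ]

theorem mul_le_pow_mul (hgen : ∀ i, 𝒜 (i + 1) = 𝒜 i * 𝒜 1) (hIl : 𝒜 0 * I ≤ I) :
    ∀ p, 𝒜 p * I ≤ 𝒜 1 ^ p * I
  | 0 => by rwa [pow_zero, one_mul]
  | p + 1 => by rw [succ_eq_pow_of_succ_eq_mul hgen]

theorem mul_le_mul_pow (hgen : ∀ i, 𝒜 (i + 1) = 𝒜 i * 𝒜 1) (hIr : I * 𝒜 0 ≤ I) :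
    ∀ q, I * 𝒜 q ≤ I * 𝒜 1 ^ q
  | 0 => by rwa [pow_zero, mul_one]
  | q + 1 => by rw [succ_eq_pow_of_succ_eq_mul hgen]

theorem mul_mul_le_pow_mul_mul_pow (hgen : ∀ i, 𝒜 (i + 1) = 𝒜 i * 𝒜 1) (hIl : 𝒜 0 * I ≤ I)
    (hIr : I * 𝒜 0 ≤ I) (p q : ℕ) : 𝒜 p * I * 𝒜 q ≤ 𝒜 1 ^ p * I * 𝒜 1 ^ q :=
  calc 𝒜 p * I * 𝒜 q ≤ 𝒜 1 ^ p * I * 𝒜 q := mul_le_mul' (mul_le_pow_mul hgen hIl p) le_rfl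
    _ = 𝒜 1 ^ p * (I * 𝒜 q) := mul_assoc _ _ _
    _ ≤ 𝒜 1 ^ p * (I * 𝒜 1 ^ q) := mul_le_mul' le_rfl (mul_le_mul_pow hgen hIr q)
    _ = 𝒜 1 ^ p * I * 𝒜 1 ^ q := (mul_assoc _ _ _).symm

theorem mul_mul_le_add_of_le_zero (hmul : ∀ i j, 𝒜 i * 𝒜 j ≤ 𝒜 (i + j)) (hI0 : I ≤ 𝒜 0) (p q : ℕ) :
    𝒜 p * I * 𝒜 q ≤ 𝒜 (p + q) :=
  calc 𝒜 p * I * 𝒜 q ≤ 𝒜 p * 𝒜 0 * 𝒜 q := mul_le_mul' (mul_le_mul' le_rfl hI0) le_rfl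
    _ ≤ 𝒜 (p + 0) * 𝒜 q := mul_le_mul' (hmul p 0) le_rfl
    _ ≤ 𝒜 (p + q) := hmul (p + 0) q

variable (𝒜 I) in
def gradedIdealSpan : Submodule k T :=
  ⨆ pq : ℕ × ℕ, 𝒜 pq.1 * I * 𝒜 pq.2

theorem mul_mul_le_gradedIdealSpan (p q : ℕ) : 𝒜 p * I * 𝒜 q ≤ gradedIdealSpan 𝒜 I :=
  le_iSup (fun pq : ℕ × ℕ => 𝒜 pq.1 * I * 𝒜 pq.2) (p, q)

theorem mul_gradedIdealSpan_le (hmul : ∀ i j, 𝒜 i * 𝒜 j ≤ 𝒜 (i + j)) (m : ℕ) :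
    𝒜 m * gradedIdealSpan 𝒜 I ≤ gradedIdealSpan 𝒜 I := by
  rw [gradedIdealSpan, mul_iSup]
  refine iSup_le fun ⟨p, q⟩ => ?_
  calc 𝒜 m * (𝒜 p * I * 𝒜 q) = 𝒜 m * 𝒜 p * I * 𝒜 q := by simp only [mul_assoc]
    _ ≤ 𝒜 (m + p) * I * 𝒜 q := mul_le_mul' (mul_le_mul' (hmul m p) le_rfl) le_rfl
    _ ≤ _ := mul_mul_le_gradedIdealSpan _ _

theorem gradedIdealSpan_mul_le (hmul : ∀ i j, 𝒜 i * 𝒜 j ≤ 𝒜 (i + j)) (m : ℕ) :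
    gradedIdealSpan 𝒜 I * 𝒜 m ≤ gradedIdealSpan 𝒜 I := by
  rw [gradedIdealSpan, iSup_mul]
  refine iSup_le fun ⟨p, q⟩ => ?_
  calc 𝒜 p * I * 𝒜 q * 𝒜 m = 𝒜 p * I * (𝒜 q * 𝒜 m) := mul_assoc _ _ _
    _ ≤ 𝒜 p * I * 𝒜 (q + m) := mul_le_mul' le_rfl (hmul q m)
    _ ≤ _ := mul_mul_le_gradedIdealSpan _ _

theorem top_mul_mul_top_le_gradedIdealSpan (hmul : ∀ i j, 𝒜 i * 𝒜 j ≤ 𝒜 (i + j))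
    (htop : ⨆ i, 𝒜 i = ⊤) {G : Submodule k T} (hG : G ≤ gradedIdealSpan 𝒜 I) :
    ⊤ * G * ⊤ ≤ gradedIdealSpan 𝒜 I := by
  rw [← htop, iSup_mul, iSup_mul]
  refine iSup_le fun i => ?_
  rw [mul_iSup]
  refine iSup_le fun j => ?_
  calc 𝒜 i * G * 𝒜 j ≤ 𝒜 i * gradedIdealSpan 𝒜 I * 𝒜 j :=
        mul_le_mul' (mul_le_mul' le_rfl hG) le_rfl
    _ ≤ gradedIdealSpan 𝒜 I * 𝒜 j := mul_le_mul' (mul_gradedIdealSpan_le hmul i) le_rfl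
    _ ≤ gradedIdealSpan 𝒜 I := gradedIdealSpan_mul_le hmul j

theorem add_le_gradedIdealSpan (hone : (1 : T) ∈ 𝒜 0) {D : Submodule k T}
    (hD : D ≤ I * 𝒜 1 + 𝒜 1 * I) : I + (I * 𝒜 1 + D + 𝒜 1 * I) ≤ gradedIdealSpan 𝒜 I := by
  have h1 : (1 : Submodule k T) ≤ 𝒜 0 := one_le.mpr hone
  have hl : I * 𝒜 1 ≤ gradedIdealSpan 𝒜 I :=
    calc I * 𝒜 1 = 1 * I * 𝒜 1 := by rw [one_mul]
      _ ≤ 𝒜 0 * I * 𝒜 1 := mul_le_mul' (mul_le_mul' h1 le_rfl) le_rfl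
      _ ≤ _ := mul_mul_le_gradedIdealSpan 0 1
  have hr : 𝒜 1 * I ≤ gradedIdealSpan 𝒜 I :=
    calc 𝒜 1 * I = 𝒜 1 * I * 1 := by rw [mul_one]
      _ ≤ 𝒜 1 * I * 𝒜 0 := mul_le_mul' le_rfl h1
      _ ≤ _ := mul_mul_le_gradedIdealSpan 1 0
  have hI : I ≤ gradedIdealSpan 𝒜 I :=
    calc I = 1 * I * 1 := by rw [one_mul, mul_one]
      _ ≤ 𝒜 0 * I * 𝒜 0 := mul_le_mul' (mul_le_mul' h1 le_rfl) h1
      _ ≤ _ := mul_mul_le_gradedIdealSpan 0 0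
  exact sup_le hI (sup_le (sup_le hl (hD.trans (sup_le hl hr))) hr)

theorem mem_iSup_pow_mul_mul_pow_of_mem_gradedIdealSpan (h𝒜 : DirectSum.IsInternal 𝒜)
    (hmul : ∀ i j, 𝒜 i * 𝒜 j ≤ 𝒜 (i + j)) (hgen : ∀ i, 𝒜 (i + 1) = 𝒜 i * 𝒜 1)
    (hI0 : I ≤ 𝒜 0) (hIl : 𝒜 0 * I ≤ I) (hIr : I * 𝒜 0 ≤ I) {x : T} {n : ℕ}
    (hx : x ∈ gradedIdealSpan 𝒜 I) (hxn : x ∈ 𝒜 n) :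
    x ∈ ⨆ (pq : ℕ × ℕ) (_ : pq.1 + pq.2 = n), 𝒜 1 ^ pq.1 * I * 𝒜 1 ^ pq.2 := by
  have hN (pq : ℕ × ℕ) : 𝒜 pq.1 * I * 𝒜 pq.2 ≤ 𝒜 (pq.1 + pq.2) :=
    mul_mul_le_add_of_le_zero hmul hI0 pq.1 pq.2
  have hle : (⨆ (pq : ℕ × ℕ) (_ : pq.1 + pq.2 = n), 𝒜 pq.1 * I * 𝒜 pq.2) ≤
      ⨆ (pq : ℕ × ℕ) (_ : pq.1 + pq.2 = n), 𝒜 1 ^ pq.1 * I * 𝒜 1 ^ pq.2 :=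
    iSup₂_mono fun pq _ => mul_mul_le_pow_mul_mul_pow hgen hIl hIr pq.1 pq.2
  exact hle (h𝒜.mem_iSup_fiber_of_mem_iSup hN hx hxn)

end Graded

section Interlacing

variable {k T : Type*} [CommSemiring k] [Semiring T] [Algebra k T] (V I : Submodule k T)

theorem iSup_pow_mul_mul_pow_two_le :
    (⨆ (pq : ℕ × ℕ) (_ : pq.1 + pq.2 = 2), V ^ pq.1 * I * V ^ pq.2) ≤
      I * (V * V) + V * I * V + (V * V) * I := by
  refine iSup₂_le fun ⟨p, q⟩ h => ?_
  obtain ⟨rfl, rfl⟩ | ⟨rfl, rfl⟩ | ⟨rfl, rfl⟩ :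
      (p = 0 ∧ q = 2) ∨ (p = 1 ∧ q = 1) ∨ (p = 2 ∧ q = 0) := by omega
  · simpa [pow_two] using le_sup_left.trans le_sup_left
  · simp [le_sup_right.trans le_sup_left]
  · simp [pow_two]

theorem iSup_pow_mul_mul_pow_three_le :
    (⨆ (pq : ℕ × ℕ) (_ : pq.1 + pq.2 = 3), V ^ pq.1 * I * V ^ pq.2) ≤
      I * (V * V * V) + V * I * (V * V) + (V * V) * I * V + (V * V * V) * I := by
  refine iSup₂_le fun ⟨p, q⟩ h => ?_
  obtain ⟨rfl, rfl⟩ | ⟨rfl, rfl⟩ | ⟨rfl, rfl⟩ | ⟨rfl, rfl⟩ :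
      (p = 0 ∧ q = 3) ∨ (p = 1 ∧ q = 2) ∨ (p = 2 ∧ q = 1) ∨ (p = 3 ∧ q = 0) := by omega
  · simpa [pow_succ] using le_sup_left.trans (le_sup_left.trans le_sup_left)
  · simpa [pow_two] using le_sup_right.trans (le_sup_left.trans le_sup_left)
  · simp [pow_two, le_sup_right.trans le_sup_left]
  · simp [pow_succ]

theorem mul_mul_le_top_mul_mul_top (X Y : Submodule k T) : X * I * Y ≤ ⊤ * I * ⊤ :=
  mul_le_mul' (mul_le_mul' le_top le_rfl) le_top

theorem interlaced_two_le_top_mul_mul_top :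
    I * (V * V) + V * I * V + (V * V) * I ≤ ⊤ * I * ⊤ := by
  have := mul_mul_le_top_mul_mul_top I
  exact sup_le (sup_le (by simpa using this 1 (V * V)) (this V V)) (by simpa using this (V * V) 1)

theorem interlaced_three_le_top_mul_mul_top :
    I * (V * V * V) + V * I * (V * V) + (V * V) * I * V + (V * V * V) * I ≤ ⊤ * I * ⊤ := by
  have := mul_mul_le_top_mul_mul_top I
  exact sup_le (sup_le (sup_le (by simpa using this 1 (V * V * V)) (this V (V * V)))
    (this (V * V) V)) (by simpa using this (V * V * V) 1)

theorem top_mul_top_mul_mul_top_le (G : Submodule k T) : ⊤ * (⊤ * G * ⊤) ≤ ⊤ * G * ⊤ := by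
  rw [← mul_assoc, ← mul_assoc]
  exact mul_le_mul' (mul_le_mul' le_top le_rfl) le_rfl

theorem top_mul_mul_top_mul_top_le (G : Submodule k T) : ⊤ * G * ⊤ * ⊤ ≤ ⊤ * G * ⊤ := by
  rw [mul_assoc]
  exact mul_le_mul' le_rfl le_top

end Interlacing

section Differential

variable {k T : Type*} [CommRing k] [Ring T] [Algebra k T] {𝒜 : ℕ → Submodule k T}
  {δ : T →ₗ[k] T}

theorem delta_delta_mul (hdeg : ∀ i, ∀ x ∈ 𝒜 i, δ x ∈ 𝒜 (i + 1))
    (hLeib : ∀ i j, ∀ a ∈ 𝒜 i, ∀ b ∈ 𝒜 j, δ (a * b) = δ a * b + ((-1 : k) ^ i) • (a * δ b))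
    {i j : ℕ} {a b : T} (ha : a ∈ 𝒜 i) (hb : b ∈ 𝒜 j) :
    δ (δ (a * b)) = δ (δ a) * b + a * δ (δ b) := by
  rw [hLeib i j a ha b hb, map_add, map_smul, hLeib (i + 1) j (δ a) (hdeg i a ha) b hb,
    hLeib i (j + 1) a ha (δ b) (hdeg j b hb), smul_add, smul_smul, ← pow_add]
  have hsign : (-1 : k) ^ (i + i) = 1 := by rw [← two_mul, pow_mul]; simp
  rw [hsign, one_smul, pow_succ, mul_neg_one, neg_smul]
  abel

theorem delta_delta_mem_of_generators (hgen : ∀ i, 𝒜 (i + 1) = 𝒜 i * 𝒜 1)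
    (htop : ⨆ i, 𝒜 i = ⊤) (hdeg : ∀ i, ∀ x ∈ 𝒜 i, δ x ∈ 𝒜 (i + 1))
    (hLeib : ∀ i j, ∀ a ∈ 𝒜 i, ∀ b ∈ 𝒜 j, δ (a * b) = δ a * b + ((-1 : k) ^ i) • (a * δ b))
    {J : Submodule k T} (hJl : ⊤ * J ≤ J) (hJr : J * ⊤ ≤ J)
    (h0 : ∀ a ∈ 𝒜 0, δ (δ a) ∈ J) (h1 : ∀ v ∈ 𝒜 1, δ (δ v) ∈ J) (t : T) : δ (δ t) ∈ J := by
  have hcomp : ∀ n, 𝒜 n ≤ J.comap (δ ∘ₗ δ) := by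
    intro n
    induction n with
    | zero => exact h0
    | succ n ih =>
      rw [hgen n, mul_le]
      intro a ha v hv
      rw [mem_comap, LinearMap.comp_apply, delta_delta_mul hdeg hLeib ha hv]
      exact add_mem (hJr (mul_mem_mul (ih ha) mem_top)) (hJl (mul_mem_mul mem_top (h1 v hv)))
  have htop_le : ⊤ ≤ J.comap (δ ∘ₗ δ) := htop ▸ iSup_le hcomp
  exact htop_le mem_top

end Differential

/-- For an `𝒜`-balanced ideal `I` with generated ideal `J`, the
following are equivalent: (1) `𝒜` is interlaced with `I`;
(2) `δ²(A) ⊆ J` and `δ²(V) ⊆ J`; (3) `δ²(T) ⊆ J`. -/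
theorem balanced_interlaced_tfae {k T : Type*} [Field k] [Ring T] [Algebra k T]
    (𝒜 : ℕ → Submodule k T) (hone : (1 : T) ∈ 𝒜 0)
    (hmul : ∀ i j : ℕ, 𝒜 i * 𝒜 j ≤ 𝒜 (i + j))
    (hgen : ∀ i : ℕ, 𝒜 (i + 1) = 𝒜 i * 𝒜 1)
    (hInternal : DirectSum.IsInternal 𝒜)
    (δ : T →ₗ[k] T)
    (hdeg : ∀ i : ℕ, ∀ x ∈ 𝒜 i, δ x ∈ 𝒜 (i + 1))
    (hLeib : ∀ i j : ℕ, ∀ a ∈ 𝒜 i, ∀ b ∈ 𝒜 j,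
      δ (a * b) = δ a * b + ((-1 : k) ^ i) • (a * δ b))
    (I : Submodule k T) (hI0 : I ≤ 𝒜 0)
    (hIl : 𝒜 0 * I ≤ I) (hIr : I * 𝒜 0 ≤ I)
    (hbal : Submodule.map δ I ≤ I * 𝒜 1 + 𝒜 1 * I) :
    (let J : Submodule k T :=
      ⊤ * (I + (I * 𝒜 1 + Submodule.map δ I + 𝒜 1 * I)) * ⊤
     -- (1) ↔ (2)
     (((∀ a ∈ 𝒜 0, δ (δ a) ∈
          I * (𝒜 1 * 𝒜 1) + 𝒜 1 * I * 𝒜 1 + (𝒜 1 * 𝒜 1) * I) ∧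
        (∀ v ∈ 𝒜 1, δ (δ v) ∈
          I * (𝒜 1 * 𝒜 1 * 𝒜 1) + 𝒜 1 * I * (𝒜 1 * 𝒜 1) +
            (𝒜 1 * 𝒜 1) * I * 𝒜 1 + (𝒜 1 * 𝒜 1 * 𝒜 1) * I)) ↔
       ((∀ a ∈ 𝒜 0, δ (δ a) ∈ J) ∧ (∀ v ∈ 𝒜 1, δ (δ v) ∈ J))) ∧
     -- (2) ↔ (3)
     (((∀ a ∈ 𝒜 0, δ (δ a) ∈ J) ∧ (∀ v ∈ 𝒜 1, δ (δ v) ∈ J)) ↔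
       (∀ t : T, δ (δ t) ∈ J))) := by
  intro J
  have htop : ⨆ i, 𝒜 i = ⊤ := hInternal.submodule_iSup_eq_top
  have hIJ : ⊤ * I * ⊤ ≤ J := mul_le_mul' (mul_le_mul' le_rfl le_sup_left) le_rfl
  have hJ : J ≤ gradedIdealSpan 𝒜 I :=
    top_mul_mul_top_le_gradedIdealSpan hmul htop (add_le_gradedIdealSpan hone hbal)
  have hJ_deg {n : ℕ} {x : T} (hxn : x ∈ 𝒜 n) (hxJ : x ∈ J) :
      x ∈ ⨆ (pq : ℕ × ℕ) (_ : pq.1 + pq.2 = n), 𝒜 1 ^ pq.1 * I * 𝒜 1 ^ pq.2 :=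
    mem_iSup_pow_mul_mul_pow_of_mem_gradedIdealSpan hInternal hmul hgen hI0 hIl hIr (hJ hxJ) hxn
  refine ⟨⟨fun ⟨hA, hV⟩ => ⟨fun a ha => ?_, fun v hv => ?_⟩,
    fun ⟨hA, hV⟩ => ⟨fun a ha => ?_, fun v hv => ?_⟩⟩,
    fun ⟨hA, hV⟩ => delta_delta_mem_of_generators hgen htop hdeg hLeib
      (top_mul_top_mul_mul_top_le _) (top_mul_mul_top_mul_top_le _) hA hV,
    fun h => ⟨fun a _ => h a, fun v _ => h v⟩⟩
  · exact hIJ (interlaced_two_le_top_mul_mul_top _ _ (hA a ha))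
  · exact hIJ (interlaced_three_le_top_mul_mul_top _ _ (hV v hv))
  · exact iSup_pow_mul_mul_pow_two_le _ _ (hJ_deg (hdeg 1 _ (hdeg 0 a ha)) (hA a ha))
  · exact iSup_pow_mul_mul_pow_three_le _ _ (hJ_deg (hdeg 2 _ (hdeg 1 v hv)) (hV v hv))
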